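/- arXiv:math/0408320 — 2 statements merged into one kernel-verified Lean document; each statement's English description precedes it below -/
import Mathlib

section
/- Suppose the characteristic polynomial has n distinct nonzero roots α_1, ..., α_n. Then for every h ≥ 0, u_h equals (−1)^{n+1} times the quotient of two determinants: the numerator is the determinant of the (n+1)×(n+1) matrix whose first column is (u_0, u_1, ..., u_{n−1}, 0)^t and whose remaining columns are (1, α_i, α_i^2, ..., α_i^{n−1}, α_i^h)^t for i = 1, ..., n, and the denominator is the Vandermonde product Π_{1≤i<j≤n} (α_j − α_i). -/
/-- `u` satisfies the linear recurrence `u_{h+n} = Σ_{i=1}^n s_i u_{h+n-i}`. -/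
def IsRecSeq (n : ℕ) (s : Fin n → ℂ) (u : ℕ → ℂ) : Prop :=
  ∀ h : ℕ, u (h + n) = ∑ i : Fin n, s i * u (h + n - (i.val + 1))

/-!
Since the `α i` are distinct roots of the characteristic polynomial, the geometric sequences
`α i ^ m` span the `n`-dimensional solution space, so `u m = ∑ i, c i * α i ^ m` with `c` obtained
by inverting the Vandermonde matrix on the initial values. Hence the first column of the matrix is
`∑ i, c i • (column i + 1) - u h • e_last`; by multilinearity the determinant is `-u h` times the
cofactor of `e_last`, which is `(-1) ^ n` times the Vandermonde determinant
`∏ i < j, (α j - α i)`.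
-/

open Matrix Finset

section Determinant

variable {R : Type*} [CommRing R] {n : ℕ}

theorem prod_filter_lt_sub_eq_det_vandermonde (v : Fin n → R) :
    ∏ p ∈ univ.filter (fun p : Fin n × Fin n => p.1 < p.2), (v p.2 - v p.1) =
      (vandermonde v).det := by
  rw [det_vandermonde, ← univ_product_univ, prod_filter, prod_product]
  refine prod_congr rfl fun i _ => ?_
  rw [← prod_filter]
  congr 1
  ext j
  simp

theorem det_updateCol_zero_single_last (A : Matrix (Fin (n + 1)) (Fin (n + 1)) R) :
    (A.updateCol 0 (Pi.single (Fin.last n) 1)).det =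
      (-1) ^ n * (A.submatrix Fin.castSucc Fin.succ).det := by
  rw [det_succ_column_zero, sum_eq_single (Fin.last n)]
  · have : (A.updateCol 0 (Pi.single (Fin.last n) 1)).submatrix Fin.castSucc Fin.succ =
        A.submatrix Fin.castSucc Fin.succ := by
      ext r k
      simp
    simp [Fin.succAbove_last, this]
  · intro r _ hr
    simp [hr]
  · simp

theorem det_eq_of_col_zero_eq_add_single (A : Matrix (Fin (n + 1)) (Fin (n + 1)) R)
    (c : Fin n → R) (a : R)
    (hA : ∀ r, A r 0 =
      ∑ k, c k * A r k.succ + a * (Pi.single (Fin.last n) 1 : Fin (n + 1) → R) r) :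
    A.det = a * (-1) ^ n * (A.submatrix Fin.castSucc Fin.succ).det := by
  have hcol : (fun r => A r 0) = (fun r => ∑ k, (Fin.cons 0 c : Fin (n + 1) → R) k • A r k) +
      a • Pi.single (Fin.last n) 1 := by
    ext r
    simp [hA r, Fin.sum_univ_succ]
  calc A.det = (A.updateCol 0 fun r => A r 0).det := by rw [updateCol_eq_self]
    _ = a * (-1) ^ n * (A.submatrix Fin.castSucc Fin.succ).det := by
      rw [hcol, det_updateCol_add, det_updateCol_sum, det_updateCol_smul,
        det_updateCol_zero_single_last]
      simp [mul_assoc]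

def recurrenceDetMatrix (α : Fin n → R) (u : ℕ → R) (h : ℕ) :
    Matrix (Fin (n + 1)) (Fin (n + 1)) R :=
  Matrix.of fun r c =>
    Fin.cases (Fin.lastCases 0 (fun r' : Fin n => u r'.val) r)
      (fun i : Fin n => Fin.lastCases (α i ^ h) (fun r' : Fin n => α i ^ r'.val) r) c

theorem det_recurrenceDetMatrix (α : Fin n → R) (u : ℕ → R) (c : Fin n → R)
    (hu : ∀ m, u m = ∑ i, c i * α i ^ m) (h : ℕ) :
    (recurrenceDetMatrix α u h).det = (-1) ^ (n + 1) * u h * (vandermonde α).det := by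
  have hsub : (recurrenceDetMatrix α u h).submatrix Fin.castSucc Fin.succ = (vandermonde α)ᵀ := by
    ext r i
    simp [recurrenceDetMatrix]
  rw [det_eq_of_col_zero_eq_add_single _ c (-u h), hsub, det_transpose]
  · ring
  · intro r
    induction r using Fin.lastCases with
    | last => simp [recurrenceDetMatrix, hu h]
    | cast r => simp [recurrenceDetMatrix, hu r, (Fin.castSucc_lt_last r).ne]

end Determinant

namespace LinearRecurrence

variable {K : Type*} [Field K]

theorem exists_eq_sum_pow_of_isRoot (E : LinearRecurrence K) {α : Fin E.order → K}
    (hα : Function.Injective α) (hroot : ∀ i, E.charPoly.IsRoot (α i)) {u : ℕ → K}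
    (hu : E.IsSolution u) : ∃ c : Fin E.order → K, ∀ m, u m = ∑ i, c i * α i ^ m := by
  set V := vandermonde α
  set c := (fun j : Fin E.order => u j) ᵥ* V⁻¹
  have hc : c ᵥ* V = fun j : Fin E.order => u j := by
    rw [vecMul_vecMul, nonsing_inv_mul _ (det_vandermonde_ne_zero_iff.mpr hα).isUnit, vecMul_one]
  have hsol : E.IsSolution fun m => ∑ i, c i * α i ^ m := by
    have hgeom i := (E.is_sol_iff_mem_solSpace _).mp
      ((E.geom_sol_iff_root_charPoly _).mpr (hroot i))
    have := E.solSpace.sum_smul_mem (t := univ) c fun i _ => hgeom i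
    rw [E.is_sol_iff_mem_solSpace]
    convert this using 1
    ext m
    simp
  refine ⟨c, congrFun ((E.eq_iff_eqOn_range_order _ _ hu hsol).mpr fun m hm => ?_)⟩
  simpa [vecMul, dotProduct, V] using (congrFun hc ⟨m, mem_range.mp hm⟩).symm

end LinearRecurrence

/-- Mathlib weights `u (h + j)` by `coeffs j`, whereas `IsRecSeq` weights `u (h + n - (i + 1))` by
`s i`; the two indexings differ by `Fin.rev`. -/
def recSeqRecurrence (n : ℕ) (s : Fin n → ℂ) : LinearRecurrence ℂ :=
  ⟨n, fun j => s j.rev⟩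

theorem Fin.sum_rev_eq_sum_sub_succ {M : Type*} [AddCommMonoid M] {n : ℕ}
    (g : Fin n → ℕ → M) :
    ∑ j : Fin n, g j.rev j = ∑ i : Fin n, g i (n - (i.val + 1)) :=
  (Fintype.sum_equiv Fin.revPerm _ _ fun i => by simp [Fin.val_rev]).symm

theorem eval_charPoly_recSeqRecurrence (n : ℕ) (s : Fin n → ℂ) (q : ℂ) :
    (recSeqRecurrence n s).charPoly.eval q = q ^ n - ∑ i : Fin n, s i * q ^ (n - (i.val + 1)) := by
  simp only [LinearRecurrence.charPoly, recSeqRecurrence, Polynomial.eval_sub,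
    Polynomial.eval_monomial, Polynomial.eval_finsetSum, one_mul]
  exact congrArg (q ^ n - ·) (Fin.sum_rev_eq_sum_sub_succ fun i k => s i * q ^ k)

theorem IsRecSeq.isSolution_recSeqRecurrence {n : ℕ} {s : Fin n → ℂ} {u : ℕ → ℂ}
    (hu : IsRecSeq n s u) : (recSeqRecurrence n s).IsSolution u := by
  intro h
  show u (h + n) = ∑ i : Fin n, s i.rev * u (h + i)
  rw [hu h]
  refine (sum_congr rfl fun i _ => ?_).trans
    (Fin.sum_rev_eq_sum_sub_succ fun i k => s i * u (h + k)).symm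
  rw [Nat.add_sub_assoc i.isLt]

theorem stmt7_general (n : ℕ) (s : Fin n → ℂ)
    (α : Fin n → ℂ) (hinj : Function.Injective α)
    (hfac : ∀ X : ℂ, X ^ n - ∑ i : Fin n, s i * X ^ (n - (i.val + 1)) =
      ∏ i : Fin n, (X - α i))
    (u : ℕ → ℂ) (hu : IsRecSeq n s u) (h : ℕ) :
    u h = (-1 : ℂ) ^ (n + 1) *
      (∏ p ∈ Finset.univ.filter (fun p : Fin n × Fin n => p.1 < p.2),
        (α p.2 - α p.1))⁻¹ *
      (Matrix.of fun r c : Fin (n + 1) =>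
        Fin.cases
          (Fin.lastCases (0 : ℂ) (fun r' : Fin n => u r'.val) r)
          (fun i : Fin n =>
            Fin.lastCases (α i ^ h) (fun r' : Fin n => α i ^ r'.val) r)
          c).det := by
  have hroot i : (recSeqRecurrence n s).charPoly.IsRoot (α i) := by
    rw [Polynomial.IsRoot, eval_charPoly_recSeqRecurrence, hfac,
      prod_eq_zero (mem_univ i) (sub_self _)]
  obtain ⟨c, hc⟩ := (recSeqRecurrence n s).exists_eq_sum_pow_of_isRoot hinj hroot
    hu.isSolution_recSeqRecurrence
  have hV : (vandermonde α).det ≠ 0 := det_vandermonde_ne_zero_iff.mpr hinj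
  change _ = _ * _ * (recurrenceDetMatrix α u h).det
  rw [prod_filter_lt_sub_eq_det_vandermonde, det_recurrenceDetMatrix α u c hc]
  field_simp
  rw [← pow_mul', pow_mul, neg_one_sq, one_pow, mul_one]

theorem stmt7 (n : ℕ) (hn : 1 ≤ n) (s : Fin n → ℂ)
    (hs : s ⟨n - 1, Nat.sub_lt hn one_pos⟩ ≠ 0)
    (α : Fin n → ℂ) (hinj : Function.Injective α)
    (hfac : ∀ X : ℂ, X ^ n - ∑ i : Fin n, s i * X ^ (n - (i.val + 1)) =
      ∏ i : Fin n, (X - α i))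
    (u : ℕ → ℂ) (hu : IsRecSeq n s u) (h : ℕ) :
    u h = (-1 : ℂ) ^ (n + 1) *
      (∏ p ∈ Finset.univ.filter (fun p : Fin n × Fin n => p.1 < p.2),
        (α p.2 - α p.1))⁻¹ *
      (Matrix.of fun r c : Fin (n + 1) =>
        Fin.cases
          (Fin.lastCases (0 : ℂ) (fun r' : Fin n => u r'.val) r)
          (fun i : Fin n =>
            Fin.lastCases (α i ^ h) (fun r' : Fin n => α i ^ r'.val) r)
          c).det :=
  stmt7_general n s α hinj hfac u hu h
end

section
/- Suppose the characteristic polynomial has n distinct nonzero roots α_1, ..., α_n, and let k_0 < k_1 < ⋯ < k_{n−1} be nonnegative integers such that the n×n matrix M = (α_i^{k_j}) is invertible. Then for every h ≥ 0, u_h = (−1)^{n+1} det(M)^{−1} det(N), where N is the (n+1)×(n+1) matrix whose first column is (u_{k_0}, ..., u_{k_{n−1}}, 0)^t and whose remaining columns are (α_i^{k_0}, ..., α_i^{k_{n−1}}, α_i^h)^t for i = 1, ..., n. -/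
open Matrix

namespace Matrix

variable {R : Type*} [CommRing R] {n : ℕ}

theorem det_updateCol_zero_sum_succ (A : Matrix (Fin (n + 1)) (Fin (n + 1)) R) (c : Fin n → R) :
    (A.updateCol 0 fun r => ∑ i, c i • A r i.succ).det = 0 := by
  have h := det_updateCol_sum A 0 (Fin.cons 0 c)
  simp only [Fin.sum_univ_succ, Fin.cons_zero, Fin.cons_succ, zero_smul, zero_add] at h
  exact h

theorem det_updateCol_zero_single_last (A : Matrix (Fin (n + 1)) (Fin (n + 1)) R) (x : R) :
    (A.updateCol 0 (Pi.single (Fin.last n) x)).det =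
      (-1) ^ n * x * (A.submatrix Fin.castSucc Fin.succ).det := by
  rw [det_succ_column_zero, Fintype.sum_eq_single (Fin.last n)]
  · simp [submatrix]
  · intro r hr
    simp [Pi.single_eq_of_ne hr]

theorem det_cases_lastCases_mulVec (A : Matrix (Fin n) (Fin n) R) (b c : Fin n → R) :
    (of fun r j : Fin (n + 1) =>
      Fin.cases (Fin.lastCases 0 (A *ᵥ c) r)
        (fun i => Fin.lastCases (b i) (fun r' => A r' i) r) j).det =
      (-1) ^ (n + 1) * (b ⬝ᵥ c) * A.det := by
  set N : Matrix (Fin (n + 1)) (Fin (n + 1)) R := of fun r j =>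
    Fin.cases (Fin.lastCases 0 (A *ᵥ c) r) (fun i => Fin.lastCases (b i) (fun r' => A r' i) r) j
  have hcol : N = N.updateCol 0
      ((fun r => ∑ i, c i • N r i.succ) + Pi.single (Fin.last n) (-(b ⬝ᵥ c))) := by
    ext r j
    refine Fin.cases ?_ (fun i => by simp) j
    refine Fin.lastCases ?_ (fun r' => ?_) r
    · simp [N, dotProduct, mul_comm]
    · simp [N, mulVec, dotProduct, mul_comm]
  have hsub : N.submatrix Fin.castSucc Fin.succ = A := by
    ext r i
    simp [N]
  rw [hcol, det_updateCol_add, det_updateCol_zero_sum_succ, det_updateCol_zero_single_last,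
    hsub, zero_add, pow_succ]
  ring

end Matrix

theorem LinearRecurrence.exists_eq_sum_mul_pow {K : Type*} [Field K] (E : LinearRecurrence K)
    {α : Fin E.order → K} (hα : Function.Injective α)
    (hgeom : ∀ i, E.IsSolution fun m => α i ^ m) {u : ℕ → K} (hu : E.IsSolution u) :
    ∃ c : Fin E.order → K, u = fun m => ∑ i, c i * α i ^ m := by
  have hV : IsUnit (vandermonde α).det :=
    isUnit_iff_ne_zero.mpr (det_vandermonde_ne_zero_iff.mpr hα)
  set c := (fun m : Fin E.order => u m) ᵥ* (vandermonde α)⁻¹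
  have hc : c ᵥ* vandermonde α = fun m : Fin E.order => u m := by
    rw [vecMul_vecMul, nonsing_inv_mul _ hV, vecMul_one]
  have hsol : E.IsSolution fun m => ∑ i, c i * α i ^ m := by
    have := E.solSpace.sum_mem (t := Finset.univ) fun i _ => E.solSpace.smul_mem (c i) (hgeom i)
    rw [E.is_sol_iff_mem_solSpace]
    convert this using 1
    ext m
    simp [Finset.sum_apply]
  refine ⟨c, (E.eq_iff_eqOn_range_order _ _ hu hsol).mpr fun m hm => ?_⟩
  have := congrFun hc ⟨m, Finset.mem_range.mp hm⟩
  simp only [vecMul, dotProduct, vandermonde_apply] at this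
  exact this.symm

/-- `LinearRecurrence` indexes the coefficient of `u (h + j)` by `j`, the reverse of the order
in `IsRecSeq`. -/
def LinearRecurrence.ofRevCoeffs {R : Type*} [CommSemiring R] (n : ℕ) (s : Fin n → R) :
    LinearRecurrence R :=
  ⟨n, fun j => s j.rev⟩

theorem isRecSeq_iff_isSolution {n : ℕ} {s : Fin n → ℂ} {u : ℕ → ℂ} :
    IsRecSeq n s u ↔ (LinearRecurrence.ofRevCoeffs n s).IsSolution u := by
  refine forall_congr' fun h => Eq.congr_right (Fintype.sum_equiv Fin.revPerm _ _ fun i => ?_)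
  simp only [Fin.revPerm_apply, Fin.val_rev]
  rw [Nat.add_sub_assoc i.isLt]
  simp [LinearRecurrence.ofRevCoeffs]

theorem isRecSeq_pow {n : ℕ} {s : Fin n → ℂ} {q : ℂ}
    (hq : q ^ n = ∑ i : Fin n, s i * q ^ (n - (i.val + 1))) : IsRecSeq n s fun m => q ^ m := by
  intro h
  dsimp only
  rw [pow_add, hq, Finset.mul_sum]
  refine Finset.sum_congr rfl fun i _ => ?_
  rw [Nat.add_sub_assoc i.isLt, pow_add]
  ring

theorem stmt8_general (n : ℕ) (s : Fin n → ℂ)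
    (α : Fin n → ℂ) (hinj : Function.Injective α)
    (hfac : ∀ X : ℂ, X ^ n - ∑ i : Fin n, s i * X ^ (n - (i.val + 1)) =
      ∏ i : Fin n, (X - α i))
    (u : ℕ → ℂ) (hu : IsRecSeq n s u)
    (k : Fin n → ℕ)
    (M : Matrix (Fin n) (Fin n) ℂ) (hM : M = Matrix.of fun r c : Fin n => α c ^ k r)
    (hMdet : M.det ≠ 0) (h : ℕ) :
    u h = (-1 : ℂ) ^ (n + 1) * M.det⁻¹ *
      (Matrix.of fun r c : Fin (n + 1) =>
        Fin.cases
          (Fin.lastCases (0 : ℂ) (fun r' : Fin n => u (k r')) r)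
          (fun i : Fin n =>
            Fin.lastCases (α i ^ h) (fun r' : Fin n => α i ^ k r') r)
          c).det := by
  have hroot : ∀ i, α i ^ n = ∑ j : Fin n, s j * α i ^ (n - (j.val + 1)) := fun i =>
    sub_eq_zero.mp ((hfac (α i)).trans (Finset.prod_eq_zero (Finset.mem_univ i) (sub_self _)))
  obtain ⟨c, rfl⟩ : ∃ c : Fin n → ℂ, u = fun m => ∑ i, c i * α i ^ m :=
    (LinearRecurrence.ofRevCoeffs n s).exists_eq_sum_mul_pow hinj
      (fun i => isRecSeq_iff_isSolution.mp (isRecSeq_pow (hroot i)))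
      (isRecSeq_iff_isSolution.mp hu)
  have hcol : (fun r => ∑ i, c i * α i ^ k r) = M *ᵥ c := by
    ext r
    simp [hM, mulVec, dotProduct, mul_comm]
  have hdet := det_cases_lastCases_mulVec M (fun i => α i ^ h) c
  subst hM
  simp only [of_apply] at hdet
  rw [hcol, hdet]
  field_simp
  simp [dotProduct, mul_comm, ← pow_mul]

theorem stmt8 (n : ℕ) (hn : 1 ≤ n) (s : Fin n → ℂ)
    (hs : s ⟨n - 1, Nat.sub_lt hn one_pos⟩ ≠ 0)
    (α : Fin n → ℂ) (hinj : Function.Injective α)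
    (hfac : ∀ X : ℂ, X ^ n - ∑ i : Fin n, s i * X ^ (n - (i.val + 1)) =
      ∏ i : Fin n, (X - α i))
    (u : ℕ → ℂ) (hu : IsRecSeq n s u)
    (k : Fin n → ℕ) (hk : StrictMono k)
    (M : Matrix (Fin n) (Fin n) ℂ) (hM : M = Matrix.of fun r c : Fin n => α c ^ k r)
    (hMdet : M.det ≠ 0) (h : ℕ) :
    u h = (-1 : ℂ) ^ (n + 1) * M.det⁻¹ *
      (Matrix.of fun r c : Fin (n + 1) =>
        Fin.cases
          (Fin.lastCases (0 : ℂ) (fun r' : Fin n => u (k r')) r)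
          (fun i : Fin n =>
            Fin.lastCases (α i ^ h) (fun r' : Fin n => α i ^ k r') r)
          c).det :=
  stmt8_general n s α hinj hfac u hu k M hM hMdet h
end
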